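/- arXiv:1809.01262 — 2 statements merged into one kernel-verified Lean document; each statement's English description precedes it below -/
import Mathlib

section
/- Let n≥2 and let λ be a partition with at most n parts such that n>(|λ|+1)/2. Then every partition μ with at most n parts satisfying μ≤_C λ has μ_n≤1 and does not satisfy both μ_{n−1}=2 and μ_n=1. (Consequently, among the dominant weights below λ in the type C_n order, the cocovers (…21)⋗(…10), labeled by ε_{n−1}+ε_n, and (…(a+2))⋗(…a), labeled by 2ε_n, never occur; this is the type C stable range.) -/
namespace AtomicPaper

/-- The sum of the first `j` parts of `μ` (parts are 0-indexed: `μ 0 = μ_1`, etc.). -/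
def sumTo (μ : ℕ → ℕ) (j : ℕ) : ℕ := ∑ i ∈ Finset.range j, μ i

/-- `μ` is a partition with at most `n` parts (0-indexed parts). -/
def IsPartitionAtMost (n : ℕ) (μ : ℕ → ℕ) : Prop :=
  (∀ i j, i ≤ j → μ j ≤ μ i) ∧ ∀ i, n ≤ i → μ i = 0

/-- Type `C_n` dominance order: `μ ≤_C λ` iff `λ - μ` is a nonnegative integer combination of
the type `C_n` simple roots `ε_i - ε_{i+1}` (`1 ≤ i ≤ n-1`) and `2 ε_n`; equivalently,
`Σ_{i=1}^{j} (λ_i - μ_i) ≥ 0` for all `1 ≤ j ≤ n-1`, and `Σ_{i=1}^{n} (λ_i - μ_i)` is a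
nonnegative even integer. -/
def DomLeC (n : ℕ) (μ lam : ℕ → ℕ) : Prop :=
  (∀ j < n, sumTo μ j ≤ sumTo lam j) ∧
  sumTo μ n ≤ sumTo lam n ∧ 2 ∣ (sumTo lam n - sumTo μ n)

/-- the type `C` stable range. Let `n ≥ 2` and `λ` a partition with at most
`n` parts such that `n > (|λ|+1)/2`. Then every partition `μ` with at most `n` parts with
`μ ≤_C λ` has `μ_n ≤ 1`, and does not satisfy both `μ_{n-1} = 2` and `μ_n = 1`.
(Hence the type `C_n` cocovers `(…21) ⋗ (…10)`, labelled `ε_{n-1} + ε_n`, and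
`(…(a+2)) ⋗ (…a)`, labelled `2 ε_n`, never occur below `λ`.) -/
theorem statement3 (n : ℕ) (hn : 2 ≤ n) (lam : ℕ → ℕ)
    (hlam : IsPartitionAtMost n lam) (hstable : sumTo lam n + 1 < 2 * n)
    (mu : ℕ → ℕ) (hmu : IsPartitionAtMost n mu) (hdom : DomLeC n mu lam) :
    mu (n - 1) ≤ 1 ∧ ¬(mu (n - 2) = 2 ∧ mu (n - 1) = 1) := by
  obtain ⟨hmono, _⟩ := hmu
  have hsum : sumTo mu n ≤ sumTo lam n := hdom.2.1
  constructor
  · by_contra h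
    push_neg at h
    have h2 : ∀ i ∈ Finset.range n, 2 ≤ mu i := fun i hi => by
      have hi' : i < n := Finset.mem_range.mp hi
      have := hmono i (n - 1) (by omega)
      omega
    have hge : 2 * n ≤ sumTo mu n := by
      calc 2 * n = ∑ _i ∈ Finset.range n, 2 := by simp [mul_comm]
        _ ≤ sumTo mu n := Finset.sum_le_sum h2
    omega
  · rintro ⟨ha, hb⟩
    have hsplit : sumTo mu n = sumTo mu (n - 1) + mu (n - 1) := by
      have hn1 : n - 1 + 1 = n := by omega
      unfold sumTo
      rw [← hn1, Finset.sum_range_succ]; simp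
    have h3 : ∀ i ∈ Finset.range (n - 1), 2 ≤ mu i := fun i hi => by
      have hi' : i < n - 1 := Finset.mem_range.mp hi
      have := hmono i (n - 2) (by omega)
      omega
    have hge : 2 * (n - 1) ≤ sumTo mu (n - 1) := by
      calc 2 * (n - 1) = ∑ _i ∈ Finset.range (n - 1), 2 := by simp [mul_comm]
        _ ≤ sumTo mu (n - 1) := Finset.sum_le_sum h3
    omega

end AtomicPaper
end

section
/- Let n≥4 and let λ=(λ_1≥…≥λ_n) be a partition (λ_i∈ℤ_{≥0}) with n>|λ|. Then there is no type D_n integral dominant weight μ with μ≤_D λ satisfying simultaneously μ_1≥2, μ_{n−2}≥1, and μ_{n−1}+μ_n≥1. (Consequently, among the dominant weights below λ in the type D_n order, the only cocovers occurring besides the type A ones are those of the form (…1²0^{n−k−1})⋗(…0^{n−k+1}); this is the type D stable range.) -/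
namespace AtomicPaper

/-- Type `D_n` dominance order on integral weights (coordinates are 0-indexed, so `μ 0 = μ_1`):
`μ ≤_D λ` iff `λ - μ` is a nonnegative integer combination of the type `D_n` simple roots
`ε_i - ε_{i+1}` (`1 ≤ i ≤ n-1`) and `ε_{n-1} + ε_n`. Here `c k` is the coefficient of
`ε_{k+1} - ε_{k+2}` (so `c k = 0` for `k ≥ n-1`) and `d` the coefficient of `ε_{n-1} + ε_n`. -/
def DomLeD (n : ℕ) (mu lam : ℕ → ℤ) : Prop :=
  ∃ (c : ℕ → ℕ) (d : ℕ), (∀ i, n - 1 ≤ i → c i = 0) ∧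
    ∀ k : ℕ, lam k - mu k =
      (c k : ℤ) - (if k = 0 then 0 else (c (k - 1) : ℤ)) +
      (if k = n - 2 ∨ k = n - 1 then (d : ℤ) else 0)

private lemma telescope (c : ℕ → ℤ) : ∀ m : ℕ,
    ∑ k ∈ Finset.range m, (c k - if k = 0 then 0 else c (k - 1)) =
      if m = 0 then 0 else c (m - 1) := by
  intro m
  induction m with
  | zero => simp
  | succ m ih =>
    rw [Finset.sum_range_succ, ih]
    cases m with
    | zero => simp
    | succ m => simp

/-- the type `D` stable range. Let `n ≥ 4` and `λ = (λ_1 ≥ … ≥ λ_n)` a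
partition (with integer entries, 0-indexed below) with `n > |λ|`. Then there is no type `D_n`
integral dominant weight `μ = (μ_1 ≥ … ≥ μ_n)`, `μ_{n-1} + μ_n ≥ 0`, with `μ ≤_D λ`
satisfying simultaneously `μ_1 ≥ 2`, `μ_{n-2} ≥ 1` and `μ_{n-1} + μ_n ≥ 1`.
(Hence the only non-type-`A` cocovers occurring below `λ` are those of the form
`(…1²0^{n-k-1}) ⋗ (…0^{n-k+1})`.) -/
theorem statement4 (n : ℕ) (hn : 4 ≤ n) (lam : ℕ → ℤ)
    (hlam_mono : ∀ i j : ℕ, i ≤ j → lam j ≤ lam i)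
    (hlam_nonneg : ∀ k, 0 ≤ lam k)
    (hlam_supp : ∀ k, n ≤ k → lam k = 0)
    (hstable : ∑ k ∈ Finset.range n, lam k < (n : ℤ))
    (mu : ℕ → ℤ)
    (hmu_mono : ∀ i j : ℕ, i ≤ j → j < n → mu j ≤ mu i)
    (hmu_dom : 0 ≤ mu (n - 2) + mu (n - 1))
    (hmu_supp : ∀ k, n ≤ k → mu k = 0) :
    ¬(DomLeD n mu lam ∧ 2 ≤ mu 0 ∧ 1 ≤ mu (n - 3) ∧ 1 ≤ mu (n - 2) + mu (n - 1)) := by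
  rintro ⟨⟨c, d, hc0, hrec⟩, h1, h2, h3⟩
  -- total difference is 2d
  have hsum : ∑ k ∈ Finset.range n, (lam k - mu k) = 2 * d := by
    calc ∑ k ∈ Finset.range n, (lam k - mu k)
        = ∑ k ∈ Finset.range n,
            (((c k : ℤ) - if k = 0 then 0 else (c (k - 1) : ℤ)) +
              (if k = n - 2 ∨ k = n - 1 then (d : ℤ) else 0)) := by
          exact Finset.sum_congr rfl fun k _ => hrec k
      _ = (∑ k ∈ Finset.range n, ((c k : ℤ) - if k = 0 then 0 else (c (k - 1) : ℤ)))
          + ∑ k ∈ Finset.range n, (if k = n - 2 ∨ k = n - 1 then (d : ℤ) else 0) := by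
          rw [Finset.sum_add_distrib]
      _ = 2 * d := by
          rw [telescope (fun k => (c k : ℤ)) n]
          have hfil : (Finset.range n).filter (fun k => k = n - 2 ∨ k = n - 1) =
              {n - 2, n - 1} := by
            ext k; simp only [Finset.mem_filter, Finset.mem_range, Finset.mem_insert,
              Finset.mem_singleton]; omega
          rw [← Finset.sum_filter, hfil, Finset.sum_insert (by simp; omega),
            Finset.sum_singleton]
          have hn0 : n ≠ 0 := by omega
          have := hc0 (n - 1) le_rfl
          simp [hn0, this]
          ring
  have hmulam : ∑ k ∈ Finset.range n, mu k ≤ ∑ k ∈ Finset.range n, lam k := by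
    have := Finset.sum_sub_distrib (f := lam) (g := mu) (s := Finset.range n)
    have hd : (0:ℤ) ≤ 2 * d := by positivity
    omega
  -- lower bound for ∑ mu
  have hsplit : ∑ k ∈ Finset.range n, mu k =
      mu 0 + (∑ k ∈ Finset.Ico 1 (n - 2), mu k) + (mu (n - 2) + mu (n - 1)) := by
    rw [Finset.range_eq_Ico, ← Finset.sum_Ico_consecutive mu (show 0 ≤ n - 2 by omega) (show n - 2 ≤ n by omega),
      ← Finset.sum_Ico_consecutive mu (show 0 ≤ 1 by omega) (show 1 ≤ n - 2 by omega)]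
    have hpair : Finset.Ico (n - 2) n = {n - 2, n - 1} := by
      ext k; simp only [Finset.mem_Ico, Finset.mem_insert, Finset.mem_singleton]; omega
    rw [hpair, Finset.sum_insert (by simp; omega), Finset.sum_singleton]
    simp [Finset.sum_Ico_eq_sum_range]
  have hmid : (n : ℤ) - 3 ≤ ∑ k ∈ Finset.Ico 1 (n - 2), mu k := by
    have hone : ∀ k ∈ Finset.Ico 1 (n - 2), (1:ℤ) ≤ mu k := by
      intro k hk
      simp only [Finset.mem_Ico] at hk
      exact le_trans h2 (hmu_mono k (n - 3) (by omega) (by omega))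
    calc (n : ℤ) - 3 = (Finset.Ico 1 (n - 2)).card • (1:ℤ) := by
          rw [Nat.card_Ico]; simp; push_cast; omega
      _ = ∑ _k ∈ Finset.Ico 1 (n - 2), (1:ℤ) := (Finset.sum_const 1).symm
      _ ≤ _ := Finset.sum_le_sum hone
  have hlow : (n : ℤ) ≤ ∑ k ∈ Finset.range n, mu k := by
    rw [hsplit]; omega
  omega

end AtomicPaper
end
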